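/- arXiv:1804.00711 — 2 statements merged into one kernel-verified Lean document; each statement's English description precedes it below -/
import Mathlib

section
/- Let 0 < β < 2, a > 0 and λ₁ > 0. Then there exists a constant C₁ > 0 (depending only on β, a, λ₁) such that for every λ ≥ λ₁ and every t ∈ [0, a] one has E_{β,1}(λ t^β) ≤ C₁ · exp(λ^{1/β} t). -/
/-! Put `x = λ^{1/β} t`, so that `λ t^β = x^β`; it suffices to bound `E_{β,1}(x^β)` by `C e^x`
for all `x ≥ 0`. Log-convexity of `Γ` gives `Γ(y + δ) ≤ Γ(y) y^δ` for `0 ≤ δ ≤ 1`, which bounds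
the term `x^s / Γ(s+1)`, `s = βk`, by `x^{m+1}/(m+1)! + 2 x^m/m!` with `m = ⌊s⌋`. At most
`⌊1/β⌋ + 1` indices `k` share the same `m`, so the series is at most `3(⌊1/β⌋ + 1)` times the
exponential series. -/

open Real

/-- The Mittag-Leffler function `E_{β,γ}(z) = ∑_{k=0}^∞ z^k / Γ(βk + γ)` for real `z`. -/
noncomputable def mittagLeffler (β γ z : ℝ) : ℝ :=
  ∑' k : ℕ, z ^ k / Real.Gamma (β * k + γ)

open scoped Nat
open Finset

namespace Real

theorem Gamma_add_le_Gamma_mul_rpow {y δ : ℝ} (hy : 0 < y) (hδ0 : 0 ≤ δ) (hδ1 : δ ≤ 1) :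
    Gamma (y + δ) ≤ Gamma y * y ^ δ := by
  have hΓ : 0 < Gamma y := Gamma_pos_of_pos hy
  have hconv := convexOn_log_Gamma.2 (Set.mem_Ioi.2 hy) (Set.mem_Ioi.2 (by linarith : 0 < y + 1))
    (sub_nonneg.2 hδ1) hδ0 (sub_add_cancel 1 δ)
  simp only [Function.comp, smul_eq_mul, Gamma_add_one hy.ne', log_mul hy.ne' hΓ.ne'] at hconv
  rw [show (1 - δ) * y + δ * (y + 1) = y + δ by ring] at hconv
  rw [← log_le_log_iff (Gamma_pos_of_pos (by linarith)) (by positivity),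
    log_mul hΓ.ne' (rpow_pos_of_pos hy δ).ne', log_rpow hy]
  linarith

theorem rpow_div_Gamma_add_one_le {x s : ℝ} (hx : 0 < x) (hs : 0 ≤ s) :
    x ^ s / Gamma (s + 1) ≤
      x ^ (⌊s⌋₊ + 1) / (⌊s⌋₊ + 1)! + 2 * (x ^ ⌊s⌋₊ / (⌊s⌋₊)!) := by
  set m := ⌊s⌋₊
  set δ : ℝ := m + 1 - s with hδ
  have hδ0 : 0 ≤ δ := by linarith [Nat.lt_floor_add_one s]
  have hδ1 : δ ≤ 1 := by linarith [Nat.floor_le hs]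
  have hfact : ((m + 1)! : ℝ) ≤ Gamma (s + 1) * (s + 1) ^ δ := by
    rw [← Gamma_nat_eq_factorial, Nat.cast_add_one,
      show (m : ℝ) + 1 + 1 = s + 1 + δ by rw [hδ]; ring]
    exact Gamma_add_le_Gamma_mul_rpow (by linarith) hδ0 hδ1
  have hsplit : ((s + 1) / x) ^ δ ≤ 1 + (s + 1) / x := by
    have hc : 0 ≤ (s + 1) / x := by positivity
    rcases le_total ((s + 1) / x) 1 with h | h
    · linarith [rpow_le_one hc h hδ0]
    · linarith [rpow_le_self_of_one_le h hδ1]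
  have hcoef : (s + 1) / (m + 1) ≤ 2 := by
    rw [div_le_iff₀ (by positivity)]
    linarith [Nat.floor_le hs, Nat.lt_floor_add_one s, (Nat.cast_nonneg m : (0 : ℝ) ≤ m)]
  calc x ^ s / Gamma (s + 1)
      ≤ x ^ s * (s + 1) ^ δ / (m + 1)! := by
        rw [div_le_div_iff₀ (Gamma_pos_of_pos (by linarith)) (by positivity)]
        nlinarith [rpow_nonneg hx.le s]
    _ = x ^ (m + 1) / (m + 1)! * ((s + 1) / x) ^ δ := by
        rw [div_rpow (by linarith) hx.le, ← rpow_natCast, Nat.cast_add_one,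
          show (m : ℝ) + 1 = s + δ by rw [hδ]; ring, rpow_add hx]
        field_simp
    _ ≤ x ^ (m + 1) / (m + 1)! * (1 + (s + 1) / x) := by gcongr
    _ = x ^ (m + 1) / (m + 1)! + (s + 1) / (m + 1) * (x ^ m / m !) := by
        rw [Nat.factorial_succ, pow_succ]
        push_cast
        field_simp
    _ ≤ x ^ (m + 1) / (m + 1)! + 2 * (x ^ m / m !) := by gcongr

end Real

theorem Finset.card_le_of_forall_le_add {s : Finset ℕ} {L : ℕ}
    (h : ∀ a ∈ s, ∀ b ∈ s, a ≤ b + L) : #s ≤ L + 1 := by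
  rcases s.eq_empty_or_nonempty with rfl | hs
  · simp
  calc #s ≤ #(Icc (s.min' hs) (s.min' hs + L)) :=
        card_le_card fun a ha => mem_Icc.2 ⟨s.min'_le a ha, h a ha _ (s.min'_mem hs)⟩
    _ = L + 1 := by simp only [Nat.card_Icc]; omega

theorem Finset.sum_comp_le_mul_tsum {c : ℕ → ℝ} (hc0 : ∀ n, 0 ≤ c n) (hc : Summable c)
    {f : ℕ → ℕ} {L : ℕ} (hf : ∀ k k', f k = f k' → k ≤ k' + L) (s : Finset ℕ) :
    ∑ k ∈ s, c (f k) ≤ (L + 1) * ∑' n, c n := by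
  rw [sum_comp]
  calc ∑ n ∈ s.image f, #{k ∈ s | f k = n} • c n
      ≤ ∑ n ∈ s.image f, (L + 1) * c n := by
        refine sum_le_sum fun n _ => ?_
        rw [nsmul_eq_mul]
        gcongr
        · exact hc0 n
        · refine mod_cast card_le_of_forall_le_add fun a ha b hb => hf a b ?_
          rw [(mem_filter.1 ha).2, (mem_filter.1 hb).2]
    _ = (L + 1) * ∑ n ∈ s.image f, c n := (mul_sum ..).symm
    _ ≤ (L + 1) * ∑' n, c n := by
        gcongr
        exact hc.sum_le_tsum _ fun n _ => hc0 n

theorem Nat.le_add_floor_inv_of_floor_mul_eq {β : ℝ} (hβ : 0 < β) {k k' : ℕ}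
    (h : ⌊β * k⌋₊ = ⌊β * k'⌋₊) : k ≤ k' + ⌊β⁻¹⌋₊ := by
  have hlt : β * k < β * k' + 1 := by
    calc β * k < ⌊β * k⌋₊ + 1 := Nat.lt_floor_add_one _
      _ ≤ β * k' + 1 := by rw [h]; gcongr; exact Nat.floor_le (by positivity)
  have hk : (k : ℝ) < k' + ⌊β⁻¹⌋₊ + 1 := by
    calc (k : ℝ) < k' + β⁻¹ := by
          refine lt_of_mul_lt_mul_left ?_ hβ.le
          rwa [mul_add, mul_inv_cancel₀ hβ.ne']
      _ < k' + ⌊β⁻¹⌋₊ + 1 := by linarith [Nat.lt_floor_add_one β⁻¹]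
  exact Nat.lt_add_one_iff.1 (by exact_mod_cast hk)

theorem mittagLeffler_zero (β γ : ℝ) : mittagLeffler β γ 0 = (Gamma γ)⁻¹ := by
  rw [mittagLeffler, tsum_eq_single 0 fun k hk => by rw [zero_pow hk, zero_div]]
  simp

theorem mittagLeffler_one_rpow_le {β x : ℝ} (hβ : 0 < β) (hx : 0 ≤ x) :
    mittagLeffler β 1 (x ^ β) ≤ 3 * (⌊β⁻¹⌋₊ + 1) * exp x := by
  rcases hx.eq_or_lt with rfl | hx
  · rw [zero_rpow hβ.ne', mittagLeffler_zero, Gamma_one, exp_zero]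
    norm_num
    linarith [Nat.cast_nonneg (α := ℝ) ⌊β⁻¹⌋₊]
  set c : ℕ → ℝ := fun n => x ^ n / (n !)
  have hc0 : ∀ n, 0 ≤ c n := fun n => by positivity
  have hc : ∑' n, c n = exp x := by rw [exp_eq_exp_ℝ, NormedSpace.exp_eq_tsum_div]
  have hfloor : ∀ k k' : ℕ, ⌊β * k⌋₊ = ⌊β * k'⌋₊ → k ≤ k' + ⌊β⁻¹⌋₊ :=
    fun _ _ => Nat.le_add_floor_inv_of_floor_mul_eq hβ
  refine tsum_le_of_sum_range_le (fun k => by positivity) fun N => ?_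
  calc ∑ k ∈ range N, (x ^ β) ^ k / Gamma (β * k + 1)
      ≤ ∑ k ∈ range N, (c (⌊β * k⌋₊ + 1) + 2 * c ⌊β * k⌋₊) := by
        refine sum_le_sum fun k _ => ?_
        rw [← rpow_natCast, ← rpow_mul hx.le]
        exact rpow_div_Gamma_add_one_le hx (by positivity)
    _ = ∑ k ∈ range N, c (⌊β * k⌋₊ + 1) + 2 * ∑ k ∈ range N, c ⌊β * k⌋₊ := by
        rw [sum_add_distrib, mul_sum]
    _ ≤ (⌊β⁻¹⌋₊ + 1) * exp x + 2 * ((⌊β⁻¹⌋₊ + 1) * exp x) := by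
        rw [← hc]
        gcongr
        · exact sum_comp_le_mul_tsum hc0 (summable_pow_div_factorial x)
            (fun k k' h => hfloor k k' (Nat.add_right_cancel h)) _
        · exact sum_comp_le_mul_tsum hc0 (summable_pow_div_factorial x) hfloor _
    _ = 3 * (⌊β⁻¹⌋₊ + 1) * exp x := by ring

theorem mittagLeffler_one_upper_bound_general (β a lam₁ : ℝ) (hβ0 : 0 < β)
    (hlam₁ : 0 < lam₁) :
    ∃ C₁ : ℝ, 0 < C₁ ∧ ∀ lam : ℝ, lam₁ ≤ lam → ∀ t ∈ Set.Icc (0 : ℝ) a,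
      mittagLeffler β 1 (lam * t ^ β) ≤ C₁ * Real.exp (lam ^ (1 / β) * t) := by
  refine ⟨3 * (⌊β⁻¹⌋₊ + 1), by positivity, fun lam hlam t ht => ?_⟩
  have hlam0 : 0 ≤ lam := hlam₁.le.trans hlam
  have hscale : lam * t ^ β = (lam ^ (1 / β) * t) ^ β := by
    rw [mul_rpow (rpow_nonneg hlam0 _) ht.1, ← rpow_mul hlam0, one_div,
      inv_mul_cancel₀ hβ0.ne', rpow_one]
  rw [hscale]
  exact mittagLeffler_one_rpow_le hβ0 (mul_nonneg (rpow_nonneg hlam0 _) ht.1)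

/-- for `0 < β < 2`, `a > 0`, `λ₁ > 0` there is `C₁ > 0` (depending only on
`β, a, λ₁`) with `E_{β,1}(λ t^β) ≤ C₁ · exp(λ^{1/β} t)` for all `λ ≥ λ₁`, `t ∈ [0,a]`. -/
theorem mittagLeffler_one_upper_bound (β a lam₁ : ℝ) (hβ0 : 0 < β) (hβ2 : β < 2)
    (ha : 0 < a) (hlam₁ : 0 < lam₁) :
    ∃ C₁ : ℝ, 0 < C₁ ∧ ∀ lam : ℝ, lam₁ ≤ lam → ∀ t ∈ Set.Icc (0 : ℝ) a,
      mittagLeffler β 1 (lam * t ^ β) ≤ C₁ * Real.exp (lam ^ (1 / β) * t) :=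
  mittagLeffler_one_upper_bound_general β a lam₁ hβ0 hlam₁
end

section
/- Suppose in addition that A₁ > 0 is a constant such that s^{β−1} E_{β,β}(λ s^β) ≤ (A₁/β) · λ₁^{(1−β)/β} · exp(B^{1/β} s) for every λ with λ₁ ≤ λ ≤ B and every s ∈ [0,a], where λ₁ is the first term of the sequence (λ_p). Then there exists a constant C > 0, depending only on K, a, A₁, λ₁, β and B, such that for every positive integer m, every v₁, v₂ ∈ C([0,a]; ℓ²) and every t ∈ [0,a], ‖F^m(v₁)(t) − F^m(v₂)(t)‖²_{ℓ²} ≤ C^m · (t^m / m!) · ‖v₁ − v₂‖²_C, where F^m denotes the m-fold iterate of F. In particular some iterate F^{m₀} is a strict contraction on C([0,a]; ℓ²). -/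
/-!
Only the finitely many modes with `λ_p ≤ B` survive the truncation, and on `[0, a]` each of their
kernels `s ^ (β - 1) E_{β,β}(λ_p s ^ β)` is bounded by `M = (A₁/β) λ₁^{(1-β)/β} exp(B^{1/β} a)`.
Since the data terms cancel in a difference, `F` therefore satisfies the Volterra-type estimate
`‖F v₁ t - F v₂ t‖ ≤ L ∫₀ᵗ ‖v₁ η - v₂ η‖ dη` with `L = √N M K`, `N` the number of surviving modes.
Iterating it as in Picard's theorem gives `‖Fᵐ v₁ t - Fᵐ v₂ t‖ ≤ (L t)ᵐ / m! ‖v₁ - v₂‖`, whose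
square is at most `(L² a + 1)ᵐ tᵐ / m! ‖v₁ - v₂‖²`, and `(L a)ᵐ / m! → 0` makes some iterate a
contraction.
-/

open Real MeasureTheory

open Set Nat

section MittagLeffler

variable {β γ : ℝ}

theorem summable_mittagLeffler_terms (hβ : 1 ≤ β) (hγ : 1 ≤ γ) (z : ℝ) :
    Summable fun k : ℕ => z ^ k / Gamma (β * k + γ) := by
  refine Summable.of_norm_bounded_eventually (Real.summable_pow_div_factorial |z|) ?_
  filter_upwards [Filter.eventually_cofinite_ne 0] with k hk
  have hk1 : (1 : ℝ) ≤ k := Nat.one_le_cast.2 (Nat.pos_of_ne_zero hk)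
  have hfac : (k ! : ℝ) ≤ Gamma (β * k + γ) := by
    rw [← Gamma_nat_eq_factorial]
    exact Gamma_strictMonoOn_Ici.monotoneOn (mem_Ici.2 (by linarith)) (mem_Ici.2 (by nlinarith))
      (by nlinarith)
  rw [norm_div, norm_pow, Real.norm_eq_abs, Real.norm_of_nonneg (by positivity)]
  gcongr

theorem measurable_mittagLeffler (hβ : 1 ≤ β) (hγ : 1 ≤ γ) : Measurable (mittagLeffler β γ) :=
  measurable_of_tendsto_metrizable
    (fun n => Finset.measurable_sum (Finset.range n) fun k _ =>
      (measurable_id.pow_const k).div_const (Gamma (β * k + γ)))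
    (tendsto_pi_nhds.2 fun z => (summable_mittagLeffler_terms hβ hγ z).hasSum.tendsto_sum_nat)

theorem mittagLeffler_nonneg (hβ : 0 ≤ β) (hγ : 0 < γ) {z : ℝ} (hz : 0 ≤ z) :
    0 ≤ mittagLeffler β γ z :=
  tsum_nonneg fun k => div_nonneg (pow_nonneg hz k) (Gamma_pos_of_pos (by positivity)).le

end MittagLeffler

theorem lp.norm_le_sqrt_card_mul {ι : Type*} {x : lp (fun _ : ι => ℝ) 2} (S : Finset ι)
    (hS : ∀ i ∉ S, x i = 0) {c : ℝ} (hc : ∀ i ∈ S, |x i| ≤ c) : ‖x‖ ≤ √S.card * c := by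
  have hc0 : 0 ≤ √S.card * c := by
    rcases S.eq_empty_or_nonempty with rfl | ⟨i, hi⟩
    · simp
    · exact mul_nonneg (sqrt_nonneg _) ((abs_nonneg _).trans (hc i hi))
  classical
  refine lp.norm_le_of_forall_sum_le (by norm_num) hc0 fun s => ?_
  simp only [ENNReal.toReal_ofNat, rpow_two, Real.norm_eq_abs, sq_abs]
  calc ∑ i ∈ s, x i ^ 2 = ∑ i ∈ s with i ∈ S, x i ^ 2 :=
        (Finset.sum_filter_of_ne fun i _ hi => by_contra fun hiS => hi (by simp [hS i hiS])).symm
    _ ≤ ∑ i ∈ S, x i ^ 2 := Finset.sum_le_sum_of_subset_of_nonneg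
        (fun i hi => (Finset.mem_filter.1 hi).2) fun _ _ _ => sq_nonneg _
    _ ≤ ∑ _i ∈ S, c ^ 2 :=
        Finset.sum_le_sum fun i hi => sq_le_sq.2 ((hc i hi).trans (le_abs_self c))
    _ = (√S.card * c) ^ 2 := by simp [mul_pow]

theorem abs_integral_mul_sub_integral_mul_le {k g₁ g₂ h : ℝ → ℝ} {t M : ℝ} (ht : 0 ≤ t)
    (hk : AEStronglyMeasurable k) (hk0 : ∀ η ∈ Icc 0 t, 0 ≤ k η) (hkM : ∀ η ∈ Icc 0 t, k η ≤ M)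
    (hg₁ : ContinuousOn g₁ (Icc 0 t)) (hg₂ : ContinuousOn g₂ (Icc 0 t))
    (hh : IntervalIntegrable h volume 0 t) (hgh : ∀ η ∈ Icc 0 t, |g₁ η - g₂ η| ≤ h η) :
    |(∫ η in 0..t, k η * g₁ η) - ∫ η in 0..t, k η * g₂ η| ≤ M * ∫ η in 0..t, h η := by
  have hk_int : IntervalIntegrable k volume 0 t := by
    refine (intervalIntegrable_const (c := M)).mono_fun' hk.restrict ?_
    rw [uIoc_of_le ht]
    refine (ae_restrict_iff' measurableSet_Ioc).2 (ae_of_all _ fun η hη => ?_)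
    dsimp only
    rw [Real.norm_of_nonneg (hk0 η (Ioc_subset_Icc_self hη))]
    exact hkM η (Ioc_subset_Icc_self hη)
  rw [← intervalIntegral.integral_sub (hk_int.mul_continuousOn (by rwa [uIcc_of_le ht]))
    (hk_int.mul_continuousOn (by rwa [uIcc_of_le ht])), ← intervalIntegral.integral_const_mul,
    ← Real.norm_eq_abs]
  refine intervalIntegral.norm_integral_le_of_norm_le ht (ae_of_all _ fun η hη => ?_)
    (hh.const_mul M)
  have hη' : η ∈ Icc 0 t := Ioc_subset_Icc_self hη
  rw [← mul_sub, norm_mul, Real.norm_of_nonneg (hk0 η hη'), Real.norm_eq_abs]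
  exact mul_le_mul (hkM η hη') (hgh η hη') (abs_nonneg _) ((hk0 η hη').trans (hkM η hη'))

section VolterraIteration

variable {E : Type*} [NormedAddCommGroup E] {a L : ℝ} (ha : 0 ≤ a)

def VolterraLipschitzWith (L : ℝ) (T : C(Icc 0 a, E) → C(Icc 0 a, E)) : Prop :=
  ∀ w₁ w₂ (t : Icc 0 a), ‖T w₁ t - T w₂ t‖ ≤
    L * ∫ η in 0..(t : ℝ), ‖w₁ (projIcc 0 a ha η) - w₂ (projIcc 0 a ha η)‖

variable {ha} {T : C(Icc 0 a, E) → C(Icc 0 a, E)}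

theorem norm_iterate_apply_sub_le (hL : 0 ≤ L) (hT : VolterraLipschitzWith ha L T)
    (m : ℕ) (v₁ v₂ : C(Icc 0 a, E)) (t : Icc 0 a) :
    ‖T^[m] v₁ t - T^[m] v₂ t‖ ≤ (L * t) ^ m / m ! * ‖v₁ - v₂‖ := by
  induction m generalizing t with
  | zero => simpa using (v₁ - v₂).norm_coe_le_norm t
  | succ m ih =>
    set D := L ^ m / m ! * ‖v₁ - v₂‖ with hD
    have hbound : ∀ η ∈ Icc 0 (t : ℝ),
        ‖T^[m] v₁ (projIcc 0 a ha η) - T^[m] v₂ (projIcc 0 a ha η)‖ ≤ D * η ^ m := by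
      intro η hη
      have hηa : η ∈ Icc 0 a := ⟨hη.1, hη.2.trans t.2.2⟩
      convert ih ⟨η, hηa⟩ using 1
      · rw [projIcc_of_mem ha hηa]
      · ring
    have hint : ∫ η in 0..(t : ℝ), D * η ^ m = D * ((t : ℝ) ^ (m + 1) / (m + 1)) := by
      simp [integral_pow]
    calc ‖T^[m + 1] v₁ t - T^[m + 1] v₂ t‖
        ≤ L * ∫ η in 0..(t : ℝ),
            ‖T^[m] v₁ (projIcc 0 a ha η) - T^[m] v₂ (projIcc 0 a ha η)‖ := by
          simpa only [Function.iterate_succ_apply'] using hT _ _ t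
      _ ≤ L * ∫ η in 0..(t : ℝ), D * η ^ m := by
          refine mul_le_mul_of_nonneg_left (intervalIntegral.integral_mono_on t.2.1 ?_ ?_ hbound) hL
          · exact (((T^[m] v₁).continuous.comp continuous_projIcc).sub
              ((T^[m] v₂).continuous.comp continuous_projIcc)).norm.intervalIntegrable _ _
          · exact (continuous_const.mul (continuous_pow m)).intervalIntegrable _ _
      _ = (L * t) ^ (m + 1) / (m + 1)! * ‖v₁ - v₂‖ := by
          rw [hint, hD, factorial_succ]
          push_cast
          field_simp
          ring

theorem sq_norm_iterate_apply_sub_le (hL : 0 ≤ L) (hT : VolterraLipschitzWith ha L T)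
    (m : ℕ) (v₁ v₂ : C(Icc 0 a, E)) (t : Icc 0 a) :
    ‖T^[m] v₁ t - T^[m] v₂ t‖ ^ 2 ≤ (L ^ 2 * a + 1) ^ m * ((t : ℝ) ^ m / m !) * ‖v₁ - v₂‖ ^ 2 := by
  have ht0 : (0 : ℝ) ≤ t := t.2.1
  have hfac : (1 : ℝ) ≤ m ! := by exact_mod_cast factorial_pos m
  calc ‖T^[m] v₁ t - T^[m] v₂ t‖ ^ 2 ≤ ((L * t) ^ m / m ! * ‖v₁ - v₂‖) ^ 2 :=
        pow_le_pow_left₀ (norm_nonneg _) (norm_iterate_apply_sub_le hL hT m v₁ v₂ t) 2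
    _ = (L ^ 2 * t) ^ m * ((t : ℝ) ^ m / m !) / m ! * ‖v₁ - v₂‖ ^ 2 := by ring
    _ ≤ (L ^ 2 * t) ^ m * ((t : ℝ) ^ m / m !) * ‖v₁ - v₂‖ ^ 2 := by
        gcongr
        exact div_le_self (by positivity) hfac
    _ ≤ (L ^ 2 * a + 1) ^ m * ((t : ℝ) ^ m / m !) * ‖v₁ - v₂‖ ^ 2 := by
        gcongr
        nlinarith [t.2.2, sq_nonneg L]

theorem exists_iterate_contraction (hL : 0 ≤ L) (hT : VolterraLipschitzWith ha L T) :
    ∃ m : ℕ, ∃ k : ℝ, 0 ≤ k ∧ k < 1 ∧ ∀ v₁ v₂ : C(Icc 0 a, E),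
      ‖T^[m] v₁ - T^[m] v₂‖ ≤ k * ‖v₁ - v₂‖ := by
  obtain ⟨m, hm⟩ :=
    ((FloorSemiring.tendsto_pow_div_factorial_atTop (L * a)).eventually_lt_const one_pos).exists
  refine ⟨m, (L * a) ^ m / m !, by positivity, hm, fun v₁ v₂ => ?_⟩
  refine ((T^[m] v₁ - T^[m] v₂).norm_le (by positivity)).2 fun t => ?_
  calc ‖T^[m] v₁ t - T^[m] v₂ t‖ ≤ (L * t) ^ m / m ! * ‖v₁ - v₂‖ :=
        norm_iterate_apply_sub_le hL hT m v₁ v₂ t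
    _ ≤ (L * a) ^ m / m ! * ‖v₁ - v₂‖ := by
        have ht := t.2
        gcongr
        · exact mul_nonneg hL ht.1
        · exact ht.2

end VolterraIteration

local notation "ℓ²" => lp (fun _ : ℕ+ => ℝ) 2

def IsRegularizedMap (lam : ℕ+ → ℝ) (β a B : ℝ) (ha : 0 ≤ a) (c0 c1 : ℓ²) (G : ℝ → ℓ² → ℓ²)
    (F : C(Icc 0 a, ℓ²) → C(Icc 0 a, ℓ²)) : Prop :=
  ∀ v : C(Icc 0 a, ℓ²), ∀ t : Icc 0 a, ∀ p : ℕ+,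
    (lam p ≤ B → F v t p =
      mittagLeffler β 1 (lam p * (t : ℝ) ^ β) * c0 p +
      (t : ℝ) * mittagLeffler β 2 (lam p * (t : ℝ) ^ β) * c1 p +
      ∫ η in (0 : ℝ)..(t : ℝ),
        ((t : ℝ) - η) ^ (β - 1) * mittagLeffler β β (lam p * ((t : ℝ) - η) ^ β) *
          G η (v (projIcc 0 a ha η)) p) ∧
    (B < lam p → F v t p = 0)

namespace IsRegularizedMap

variable {lam : ℕ+ → ℝ} {β a B K M : ℝ} {ha : 0 ≤ a} {c0 c1 : ℓ²} {G : ℝ → ℓ² → ℓ²}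
  {F : C(Icc 0 a, ℓ²) → C(Icc 0 a, ℓ²)}

theorem abs_apply_sub_le (hF : IsRegularizedMap lam β a B ha c0 c1 G F) (hβ : 1 < β)
    (hGcont : ContinuousOn (fun q : ℝ × ℓ² => G q.1 q.2) (Icc 0 a ×ˢ univ))
    (hGlip : ∀ t ∈ Icc 0 a, ∀ v w : ℓ², ‖G t v - G t w‖ ≤ K * ‖v - w‖)
    {p : ℕ+} (hp0 : 0 ≤ lam p) (hpB : lam p ≤ B)
    (hker : ∀ s ∈ Icc 0 a, s ^ (β - 1) * mittagLeffler β β (lam p * s ^ β) ≤ M)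
    (w₁ w₂ : C(Icc 0 a, ℓ²)) (t : Icc 0 a) :
    |F w₁ t p - F w₂ t p| ≤
      M * K * ∫ η in 0..(t : ℝ), ‖w₁ (projIcc 0 a ha η) - w₂ (projIcc 0 a ha η)‖ := by
  have hκ : Measurable fun s : ℝ => s ^ (β - 1) * mittagLeffler β β (lam p * s ^ β) :=
    (measurable_id.pow_const _).mul ((measurable_mittagLeffler hβ.le hβ.le).comp
      ((measurable_id.pow_const _).const_mul _))
  have hIcc : Icc 0 (t : ℝ) ⊆ Icc 0 a := Icc_subset_Icc_right t.2.2
  have hGw : ∀ w : C(Icc 0 a, ℓ²), ContinuousOn (fun η => G η (w (projIcc 0 a ha η)) p) (Icc 0 t) :=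
    fun w => ((lp.lipschitzWith_one_eval 2 p).continuous.comp_continuousOn
      (hGcont.comp (continuous_id.prodMk (w.continuous.comp continuous_projIcc)).continuousOn
        fun η hη => ⟨hη, mem_univ _⟩)).mono hIcc
  rw [(hF w₁ t p).1 hpB, (hF w₂ t p).1 hpB, add_sub_add_left_eq_sub, mul_assoc,
    ← intervalIntegral.integral_const_mul]
  refine abs_integral_mul_sub_integral_mul_le t.2.1
    (hκ.comp (measurable_const.sub measurable_id)).aestronglyMeasurable
    (fun η hη => mul_nonneg (rpow_nonneg (sub_nonneg.2 hη.2) _)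
      (mittagLeffler_nonneg (by linarith) (by linarith)
        (mul_nonneg hp0 (rpow_nonneg (sub_nonneg.2 hη.2) _))))
    (fun η hη => hker _ ⟨sub_nonneg.2 hη.2, by linarith [hη.1, t.2.2]⟩)
    (hGw w₁) (hGw w₂) ?_ fun η hη => ?_
  · exact (continuous_const.mul (((w₁.continuous.comp continuous_projIcc).sub
      (w₂.continuous.comp continuous_projIcc)).norm)).intervalIntegrable _ _
  · rw [← Real.norm_eq_abs, ← Pi.sub_apply, ← lp.coeFn_sub]
    exact (lp.norm_apply_le_norm two_ne_zero _ p).trans (hGlip η (hIcc hη) _ _)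

theorem volterraLipschitzWith (hF : IsRegularizedMap lam β a B ha c0 c1 G F) (hβ : 1 < β)
    (hGcont : ContinuousOn (fun q : ℝ × ℓ² => G q.1 q.2) (Icc 0 a ×ˢ univ))
    (hGlip : ∀ t ∈ Icc 0 a, ∀ v w : ℓ², ‖G t v - G t w‖ ≤ K * ‖v - w‖)
    (hlam : ∀ p, 0 ≤ lam p) (hfin : {p | lam p ≤ B}.Finite)
    (hker : ∀ p, lam p ≤ B → ∀ s ∈ Icc 0 a, s ^ (β - 1) * mittagLeffler β β (lam p * s ^ β) ≤ M) :
    VolterraLipschitzWith ha (√hfin.toFinset.card * M * K) F := by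
  intro w₁ w₂ t
  rw [mul_assoc, mul_assoc]
  refine lp.norm_le_sqrt_card_mul _ (fun p hp => ?_) fun p hp => ?_
  · have hBp : B < lam p := not_le.1 (by simpa using hp)
    simp [(hF w₁ t p).2 hBp, (hF w₂ t p).2 hBp]
  · have hpB : lam p ≤ B := by simpa using hp
    simpa [← mul_assoc] using hF.abs_apply_sub_le hβ hGcont hGlip (hlam p) hpB (hker p hpB) w₁ w₂ t

end IsRegularizedMap

theorem regularized_map_iterate_contraction_general
    (lam : ℕ+ → ℝ) (hlam_pos : ∀ p, 0 < lam p) (hlam_mono : Monotone lam)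
    (hlam_tendsto : Filter.Tendsto lam Filter.atTop Filter.atTop)
    (β a B K A₁ : ℝ) (hβ1 : 1 < β) (ha : 0 < a) (hK : 0 < K)
    (hA₁ : 0 < A₁)
    (c0 c1 : lp (fun _ : ℕ+ => ℝ) 2)
    (G : ℝ → lp (fun _ : ℕ+ => ℝ) 2 → lp (fun _ : ℕ+ => ℝ) 2)
    (hGcont : ContinuousOn (fun q : ℝ × lp (fun _ : ℕ+ => ℝ) 2 => G q.1 q.2)
      (Set.Icc (0 : ℝ) a ×ˢ Set.univ))
    (hGlip : ∀ t ∈ Set.Icc (0 : ℝ) a, ∀ v w : lp (fun _ : ℕ+ => ℝ) 2,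
      ‖G t v - G t w‖ ≤ K * ‖v - w‖)
    (hA₁bound : ∀ l : ℝ, lam 1 ≤ l → l ≤ B → ∀ s ∈ Set.Icc (0 : ℝ) a,
      s ^ (β - 1) * mittagLeffler β β (l * s ^ β) ≤
        (A₁ / β) * lam 1 ^ ((1 - β) / β) * Real.exp (B ^ (1 / β) * s))
    (F : C(Set.Icc (0 : ℝ) a, lp (fun _ : ℕ+ => ℝ) 2) →
         C(Set.Icc (0 : ℝ) a, lp (fun _ : ℕ+ => ℝ) 2))
    (hF : ∀ v : C(Set.Icc (0 : ℝ) a, lp (fun _ : ℕ+ => ℝ) 2),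
      ∀ t : Set.Icc (0 : ℝ) a, ∀ p : ℕ+,
        (lam p ≤ B → F v t p =
          mittagLeffler β 1 (lam p * (t : ℝ) ^ β) * c0 p +
          (t : ℝ) * mittagLeffler β 2 (lam p * (t : ℝ) ^ β) * c1 p +
          ∫ η in (0 : ℝ)..(t : ℝ),
            ((t : ℝ) - η) ^ (β - 1) * mittagLeffler β β (lam p * ((t : ℝ) - η) ^ β) *
              G η (v (Set.projIcc 0 a ha.le η)) p) ∧
        (B < lam p → F v t p = 0)) :
    ∃ C : ℝ, 0 < C ∧
      (∀ m : ℕ, 1 ≤ m → ∀ v₁ v₂ : C(Set.Icc (0 : ℝ) a, lp (fun _ : ℕ+ => ℝ) 2),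
        ∀ t : Set.Icc (0 : ℝ) a,
          ‖(F^[m] v₁) t - (F^[m] v₂) t‖ ^ 2 ≤
            C ^ m * ((t : ℝ) ^ m / (Nat.factorial m)) * ‖v₁ - v₂‖ ^ 2) ∧
      (∃ m₀ : ℕ, ∃ k : ℝ, 0 ≤ k ∧ k < 1 ∧
        ∀ v₁ v₂ : C(Set.Icc (0 : ℝ) a, lp (fun _ : ℕ+ => ℝ) 2),
          ‖F^[m₀] v₁ - F^[m₀] v₂‖ ≤ k * ‖v₁ - v₂‖) := by
  have hfin : {p | lam p ≤ B}.Finite := by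
    obtain ⟨N, hN⟩ := Filter.eventually_atTop.1 (hlam_tendsto.eventually_gt_atTop B)
    exact (finite_Iic N).subset fun p hp => not_lt.1 fun hNp => (hN p hNp.le).not_ge hp
  obtain ⟨M, hM, hker⟩ : ∃ M, 0 ≤ M ∧ ∀ p, lam p ≤ B → ∀ s ∈ Icc 0 a,
      s ^ (β - 1) * mittagLeffler β β (lam p * s ^ β) ≤ M := by
    have := hlam_pos 1
    refine ⟨(A₁ / β) * lam 1 ^ ((1 - β) / β) * exp (B ^ (1 / β) * a), by positivity,
      fun p hpB s hs => (hA₁bound _ (hlam_mono one_le) hpB s hs).trans ?_⟩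
    have : 0 < B := (hlam_pos p).trans_le hpB
    gcongr
    exact hs.2
  have hstep : VolterraLipschitzWith ha.le (√hfin.toFinset.card * M * K) F :=
    IsRegularizedMap.volterraLipschitzWith hF hβ1 hGcont hGlip (fun p => (hlam_pos p).le) hfin hker
  have hL : 0 ≤ √hfin.toFinset.card * M * K := by positivity
  exact ⟨_, by positivity, fun m _ => sq_norm_iterate_apply_sub_le hL hstep m,
    exists_iterate_contraction hL hstep⟩

/-- under the additional kernel bound
`s^{β−1} E_{β,β}(λ s^β) ≤ (A₁/β) λ₁^{(1−β)/β} exp(B^{1/β} s)` for `λ₁ ≤ λ ≤ B`, `s ∈ [0,a]`,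
there is `C > 0` such that for every positive integer `m`, all `v₁, v₂ ∈ C([0,a];ℓ²)` and
`t ∈ [0,a]`, `‖F^m(v₁)(t) − F^m(v₂)(t)‖² ≤ C^m (t^m/m!) ‖v₁ − v₂‖²_C`; in particular some
iterate `F^{m₀}` is a strict contraction. -/
theorem regularized_map_iterate_contraction
    (lam : ℕ+ → ℝ) (hlam_pos : ∀ p, 0 < lam p) (hlam_mono : Monotone lam)
    (hlam_tendsto : Filter.Tendsto lam Filter.atTop Filter.atTop)
    (β a B K A₁ : ℝ) (hβ1 : 1 < β) (hβ2 : β < 2) (ha : 0 < a) (hB : 0 < B) (hK : 0 < K)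
    (hA₁ : 0 < A₁)
    (c0 c1 : lp (fun _ : ℕ+ => ℝ) 2)
    (G : ℝ → lp (fun _ : ℕ+ => ℝ) 2 → lp (fun _ : ℕ+ => ℝ) 2)
    (hGcont : ContinuousOn (fun q : ℝ × lp (fun _ : ℕ+ => ℝ) 2 => G q.1 q.2)
      (Set.Icc (0 : ℝ) a ×ˢ Set.univ))
    (hGlip : ∀ t ∈ Set.Icc (0 : ℝ) a, ∀ v w : lp (fun _ : ℕ+ => ℝ) 2,
      ‖G t v - G t w‖ ≤ K * ‖v - w‖)
    (hA₁bound : ∀ l : ℝ, lam 1 ≤ l → l ≤ B → ∀ s ∈ Set.Icc (0 : ℝ) a,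
      s ^ (β - 1) * mittagLeffler β β (l * s ^ β) ≤
        (A₁ / β) * lam 1 ^ ((1 - β) / β) * Real.exp (B ^ (1 / β) * s))
    (F : C(Set.Icc (0 : ℝ) a, lp (fun _ : ℕ+ => ℝ) 2) →
         C(Set.Icc (0 : ℝ) a, lp (fun _ : ℕ+ => ℝ) 2))
    (hF : ∀ v : C(Set.Icc (0 : ℝ) a, lp (fun _ : ℕ+ => ℝ) 2),
      ∀ t : Set.Icc (0 : ℝ) a, ∀ p : ℕ+,
        (lam p ≤ B → F v t p =
          mittagLeffler β 1 (lam p * (t : ℝ) ^ β) * c0 p +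
          (t : ℝ) * mittagLeffler β 2 (lam p * (t : ℝ) ^ β) * c1 p +
          ∫ η in (0 : ℝ)..(t : ℝ),
            ((t : ℝ) - η) ^ (β - 1) * mittagLeffler β β (lam p * ((t : ℝ) - η) ^ β) *
              G η (v (Set.projIcc 0 a ha.le η)) p) ∧
        (B < lam p → F v t p = 0)) :
    ∃ C : ℝ, 0 < C ∧
      (∀ m : ℕ, 1 ≤ m → ∀ v₁ v₂ : C(Set.Icc (0 : ℝ) a, lp (fun _ : ℕ+ => ℝ) 2),
        ∀ t : Set.Icc (0 : ℝ) a,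
          ‖(F^[m] v₁) t - (F^[m] v₂) t‖ ^ 2 ≤
            C ^ m * ((t : ℝ) ^ m / (Nat.factorial m)) * ‖v₁ - v₂‖ ^ 2) ∧
      (∃ m₀ : ℕ, ∃ k : ℝ, 0 ≤ k ∧ k < 1 ∧
        ∀ v₁ v₂ : C(Set.Icc (0 : ℝ) a, lp (fun _ : ℕ+ => ℝ) 2),
          ‖F^[m₀] v₁ - F^[m₀] v₂‖ ≤ k * ‖v₁ - v₂‖) :=
  regularized_map_iterate_contraction_general lam hlam_pos hlam_mono hlam_tendsto β a B K A₁ hβ1 ha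
    hK hA₁ c0 c1 G hGcont hGlip hA₁bound F hF
end
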